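/- arXiv:math/0308275 — 3 statements merged into one kernel-verified Lean document; each statement's English description precedes it below -/
import Mathlib

section
/- Let J_{12}, J_{23}, J_{31} be defined by J_{ℓm} = -tan(φ_ℓ - φ_m)·tan(φ_k) for each cyclic permutation (k,ℓ,m) of (1,2,3), where φ_1, φ_2, φ_3 are real numbers such that all the tangents involved are defined. Then J_{12} + J_{23} + J_{31} + J_{12}·J_{23}·J_{31} = 0. -/
/-!
With `tₖ = tan φₖ`, the subtraction formula `tan (φₗ - φₘ) = (tₗ - tₘ) / (1 + tₗ tₘ)` turns each
`J` into a rational function of `t₁, t₂, t₃`, and the claim becomes an identity of rational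
functions whose denominators `1 + tₗ tₘ = cos (φₗ - φₘ) / (cos φₗ cos φₘ)` do not vanish.
-/

open Real

theorem cyclic_sum_add_prod_eq_zero {K : Type*} [Field K] {a b c : K}
    (hab : 1 + a * b ≠ 0) (hbc : 1 + b * c ≠ 0) (hca : 1 + c * a ≠ 0) :
    let u := -((a - b) / (1 + a * b)) * c
    let v := -((b - c) / (1 + b * c)) * a
    let w := -((c - a) / (1 + c * a)) * b
    u + v + w + u * v * w = 0 := by
  intro u v w
  simp only [u, v, w]
  rw [mul_comm c a] at hca ⊢
  field_simp
  ring

theorem cos_sub_eq_mul_one_add_tan_mul_tan {x y : ℝ} (hx : cos x ≠ 0) (hy : cos y ≠ 0) :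
    cos (x - y) = cos x * cos y * (1 + tan x * tan y) := by
  rw [cos_sub, tan_eq_sin_div_cos, tan_eq_sin_div_cos]
  field_simp

theorem one_add_tan_mul_tan_ne_zero {x y : ℝ} (hx : cos x ≠ 0) (hy : cos y ≠ 0)
    (hxy : cos (x - y) ≠ 0) : 1 + tan x * tan y ≠ 0 := by
  rw [cos_sub_eq_mul_one_add_tan_mul_tan hx hy] at hxy
  exact right_ne_zero_of_mul hxy

theorem tan_sub_of_cos_ne_zero {x y : ℝ} (hx : cos x ≠ 0) (hy : cos y ≠ 0) :
    tan (x - y) = (tan x - tan y) / (1 + tan x * tan y) :=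
  tan_sub' ⟨cos_ne_zero_iff.mp hx, cos_ne_zero_iff.mp hy⟩

theorem J_sum_identity (φ₁ φ₂ φ₃ : ℝ)
    (h₁ : Real.cos φ₁ ≠ 0) (h₂ : Real.cos φ₂ ≠ 0) (h₃ : Real.cos φ₃ ≠ 0)
    (h₁₂ : Real.cos (φ₁ - φ₂) ≠ 0) (h₂₃ : Real.cos (φ₂ - φ₃) ≠ 0)
    (h₃₁ : Real.cos (φ₃ - φ₁) ≠ 0) :
    let J₁₂ := -Real.tan (φ₁ - φ₂) * Real.tan φ₃
    let J₂₃ := -Real.tan (φ₂ - φ₃) * Real.tan φ₁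
    let J₃₁ := -Real.tan (φ₃ - φ₁) * Real.tan φ₂
    J₁₂ + J₂₃ + J₃₁ + J₁₂ * J₂₃ * J₃₁ = 0 := by
  rw [tan_sub_of_cos_ne_zero h₁ h₂, tan_sub_of_cos_ne_zero h₂ h₃, tan_sub_of_cos_ne_zero h₃ h₁]
  exact cyclic_sum_add_prod_eq_zero (one_add_tan_mul_tan_ne_zero h₁ h₂ h₁₂)
    (one_add_tan_mul_tan_ne_zero h₂ h₃ h₂₃) (one_add_tan_mul_tan_ne_zero h₃ h₁ h₃₁)
end

section
/- Let s_1, s_2, s_3 be real numbers with s_k = 1 + t_ℓ t_m where t_k = tan(φ_k − φ_0) for real φ_0, φ_1, φ_2, φ_3 with all tangents defined, and (k,ℓ,m) cyclic permutations of (1,2,3). Then for u_μ = e^{2iφ_μ}, the Lagrange resolvent Φ(u) = ((u_0+u_1)(u_2+u_3), (u_0+u_2)(u_3+u_1), (u_0+u_3)(u_1+u_2)) is projectively equal to the real point (s_1, s_2, s_3); i.e., there exists a nonzero complex scalar λ with (u_0+u_k)(u_ℓ+u_m) = λ·s_k for k = 1,2,3. -/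
open Complex

lemma exp_sum_cos (a b : ℝ) :
    Complex.exp (2 * I * (a : ℝ)) + Complex.exp (2 * I * (b : ℝ)) =
      2 * Complex.exp (I * ((a : ℂ) + b)) * ((Real.cos (a - b) : ℝ) : ℂ) := by
  rw [Complex.ofReal_cos, Complex.cos, Complex.ofReal_sub]
  rw [show ((a : ℂ) - b) * I = 2 * I * a - I * (a + b) by ring,
      show (-((a : ℂ) - b)) * I = 2 * I * b - I * (a + b) by ring,
      Complex.exp_sub, Complex.exp_sub]
  have h := Complex.exp_ne_zero (I * ((a : ℂ) + b))
  field_simp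

lemma cos_sub_factor (x y : ℝ) (hx : Real.cos x ≠ 0) (hy : Real.cos y ≠ 0) :
    Real.cos (x - y) = Real.cos x * Real.cos y * (1 + Real.tan x * Real.tan y) := by
  rw [Real.cos_sub, Real.tan_eq_sin_div_cos, Real.tan_eq_sin_div_cos]
  field_simp

theorem resolvent_real_point (φ₀ φ₁ φ₂ φ₃ : ℝ)
    (h₁ : Real.cos (φ₁ - φ₀) ≠ 0) (h₂ : Real.cos (φ₂ - φ₀) ≠ 0)
    (h₃ : Real.cos (φ₃ - φ₀) ≠ 0) :
    let u : Fin 4 → ℂ := fun μ => Complex.exp (2 * I * (![φ₀, φ₁, φ₂, φ₃] μ : ℝ))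
    let t : Fin 3 → ℝ := fun k => Real.tan (![φ₁, φ₂, φ₃] k - φ₀)
    let s₁ := 1 + t 1 * t 2
    let s₂ := 1 + t 2 * t 0
    let s₃ := 1 + t 0 * t 1
    ∃ lam : ℂ, lam ≠ 0 ∧
      (u 0 + u 1) * (u 2 + u 3) = lam * s₁ ∧
      (u 0 + u 2) * (u 3 + u 1) = lam * s₂ ∧
      (u 0 + u 3) * (u 1 + u 2) = lam * s₃ := by
  intro u t s₁ s₂ s₃
  refine ⟨4 * Complex.exp (I * (((φ₀ : ℂ) + φ₁) + ((φ₂ : ℂ) + φ₃))) *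
      Real.cos (φ₁ - φ₀) * Real.cos (φ₂ - φ₀) * Real.cos (φ₃ - φ₀),
    ?_, ?_, ?_, ?_⟩
  · simp only [mul_ne_zero_iff]
    exact ⟨⟨⟨⟨by norm_num, Complex.exp_ne_zero _⟩, by exact_mod_cast h₁⟩,
      by exact_mod_cast h₂⟩, by exact_mod_cast h₃⟩
  · simp only [u, t, s₁, Matrix.cons_val_zero, Matrix.cons_val_one, Matrix.head_cons,
      Matrix.cons_val_two, Matrix.tail_cons, Matrix.cons_val_three]
    rw [exp_sum_cos φ₀ φ₁, exp_sum_cos φ₂ φ₃,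
        show φ₀ - φ₁ = -(φ₁ - φ₀) by ring, Real.cos_neg,
        show φ₂ - φ₃ = (φ₂ - φ₀) - (φ₃ - φ₀) by ring,
        cos_sub_factor _ _ h₂ h₃,
        show I * (((φ₀:ℂ) + φ₁) + ((φ₂:ℂ) + φ₃)) = I * ((φ₀:ℂ) + φ₁) + I * ((φ₂:ℂ) + φ₃)
          by ring,
        Complex.exp_add]
    push_cast
    ring
  · simp only [u, t, s₂, Matrix.cons_val_zero, Matrix.cons_val_one, Matrix.head_cons,
      Matrix.cons_val_two, Matrix.tail_cons, Matrix.cons_val_three]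
    rw [exp_sum_cos φ₀ φ₂, exp_sum_cos φ₃ φ₁,
        show φ₀ - φ₂ = -(φ₂ - φ₀) by ring, Real.cos_neg,
        show φ₃ - φ₁ = (φ₃ - φ₀) - (φ₁ - φ₀) by ring,
        cos_sub_factor _ _ h₃ h₁,
        show I * (((φ₀:ℂ) + φ₁) + ((φ₂:ℂ) + φ₃)) = I * ((φ₀:ℂ) + φ₂) + I * ((φ₃:ℂ) + φ₁)
          by ring,
        Complex.exp_add]
    push_cast
    ring
  · simp only [u, t, s₃, Matrix.cons_val_zero, Matrix.cons_val_one, Matrix.head_cons,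
      Matrix.cons_val_two, Matrix.tail_cons, Matrix.cons_val_three]
    rw [exp_sum_cos φ₀ φ₃, exp_sum_cos φ₁ φ₂,
        show φ₀ - φ₃ = -(φ₃ - φ₀) by ring, Real.cos_neg,
        show φ₁ - φ₂ = (φ₁ - φ₀) - (φ₂ - φ₀) by ring,
        cos_sub_factor _ _ h₁ h₂,
        show I * (((φ₀:ℂ) + φ₁) + ((φ₂:ℂ) + φ₃)) = I * ((φ₀:ℂ) + φ₃) + I * ((φ₁:ℂ) + φ₂)
          by ring,
        Complex.exp_add]
    push_cast
    ring
end

section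
/- The three central elements Q_1, Q_2, Q_3 defined by Q_m = J_{kℓ}(Y_0² + Y_m²) + Y_k² − Y_ℓ² (cyclic (k,ℓ,m)) in the Sklyanin-type algebra with parameters J_{12}, J_{23}, J_{31} satisfying J_{12}+J_{23}+J_{31}+J_{12}J_{23}J_{31}=0 are linearly dependent: the span of {Q_1, Q_2, Q_3} in the degree-2 part of the quadratic algebra has dimension at most 2. -/
theorem Q_linearly_dependent (A : Type*) [Ring A] [Algebra ℂ A]
    (Y₀ Y₁ Y₂ Y₃ : A) (J₁₂ J₂₃ J₃₁ : ℂ)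
    (hJ : J₁₂ + J₂₃ + J₃₁ + J₁₂ * J₂₃ * J₃₁ = 0)
    (r1 : Y₀ * Y₁ - Y₁ * Y₀ = Y₂ * Y₃ + Y₃ * Y₂)
    (r2 : Y₀ * Y₂ - Y₂ * Y₀ = Y₃ * Y₁ + Y₁ * Y₃)
    (r3 : Y₀ * Y₃ - Y₃ * Y₀ = Y₁ * Y₂ + Y₂ * Y₁)
    (r4 : Y₂ * Y₃ - Y₃ * Y₂ = -J₂₃ • (Y₀ * Y₁ + Y₁ * Y₀))
    (r5 : Y₃ * Y₁ - Y₁ * Y₃ = -J₃₁ • (Y₀ * Y₂ + Y₂ * Y₀))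
    (r6 : Y₁ * Y₂ - Y₂ * Y₁ = -J₁₂ • (Y₀ * Y₃ + Y₃ * Y₀)) :
    let Q₁ := J₂₃ • (Y₀ ^ 2 + Y₁ ^ 2) + Y₂ ^ 2 - Y₃ ^ 2
    let Q₂ := J₃₁ • (Y₀ ^ 2 + Y₂ ^ 2) + Y₃ ^ 2 - Y₁ ^ 2
    let Q₃ := J₁₂ • (Y₀ ^ 2 + Y₃ ^ 2) + Y₁ ^ 2 - Y₂ ^ 2
    ∃ c : Fin 3 → ℂ, c ≠ 0 ∧ c 0 • Q₁ + c 1 • Q₂ + c 2 • Q₃ = 0 := by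
  intro Q₁ Q₂ Q₃
  by_cases h : J₁₂ = 1 ∧ J₃₁ = -1
  · obtain ⟨h1, h2⟩ := h
    refine ⟨![2, 1 + J₂₃, 1 - J₂₃], ?_, ?_⟩
    · intro hc
      have := congrFun hc 0
      simp at this
    · subst h1 h2
      show (2 : ℂ) • Q₁ + (1 + J₂₃) • Q₂ + (1 - J₂₃) • Q₃ = 0
      simp only [Q₁, Q₂, Q₃]
      match_scalars <;> ring
  · refine ⟨![J₃₁ * J₁₂ + 1, 1 - J₁₂, 1 + J₃₁], ?_, ?_⟩
    · intro hc
      apply h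
      have h1 := congrFun hc 1
      have h2 := congrFun hc 2
      simp [Matrix.cons_val_one] at h1 h2
      constructor
      · linear_combination -h1
      · linear_combination h2
    · show (J₃₁ * J₁₂ + 1) • Q₁ + (1 - J₁₂) • Q₂ + (1 + J₃₁) • Q₃ = 0
      simp only [Q₁, Q₂, Q₃]
      match_scalars
      · linear_combination hJ
      · linear_combination hJ
      · ring
      · ring
end
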